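/- arXiv:1601.04850 — 2 statements merged into one kernel-verified Lean document; each statement's English description precedes it below -/
import Mathlib

section
/- Let P(z) = Σ_{k=0}^n λ_k z^k be a polynomial with complex coefficients, let a ∈ ℂ, δ > 0, r > 0, and let m be a positive integer. Suppose #{ k ∈ {0,…,n} : |λ_k − a| r^k ≥ δ S(r,P) } ≤ 2m. Then the coefficients λ̄_0,…,λ̄_{n+1} of P̄(z) = (1−z)P(z) satisfy #{ k ∈ {0,…,n+1} : |λ̄_k| r^k ≥ 2δ(1+r) S(r,P) } ≤ 4m + 2, where S(r,P) = Σ_{k=0}^n |λ_k| r^k. -/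
/-!
For `1 ≤ k ≤ n` the `k`-th coefficient of `(1 - z) P` is `(λ_k - a) - (λ_{k-1} - a)`, so if
`|λ̄_k| r^k ≥ (1 + r) t` then `|λ_k - a| r^k ≥ t` or `|λ_{k-1} - a| r^{k-1} ≥ t`. Hence, apart from
`k = 0` and `k = n + 1`, every large coefficient of `(1 - z) P` sits at an index `k` or `k + 1`
with `k` in the set `B` of indices where `|λ_k - a| r^k ≥ t`, giving at most `2 |B| + 2` of them.
-/

noncomputable def polyOf {n : ℕ} (lam : Fin (n + 1) → ℂ) : Polynomial ℂ :=
  ∑ k : Fin (n + 1), Polynomial.C (lam k) * Polynomial.X ^ (k : ℕ)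

open Finset Polynomial

theorem coeff_polyOf {n : ℕ} (lam : Fin (n + 1) → ℂ) (k : Fin (n + 1)) :
    (polyOf lam).coeff k = lam k := by
  simp [polyOf, Fin.val_inj]

theorem coeff_one_sub_X_mul_succ {R : Type*} [Ring R] (p : R[X]) (k : ℕ) :
    ((1 - X) * p).coeff (k + 1) = p.coeff (k + 1) - p.coeff k := by
  rw [sub_mul, one_mul, coeff_sub, coeff_X_mul]

theorem le_or_le_of_le_norm_sub_mul_pow {E : Type*} [SeminormedAddCommGroup E]
    {t r s : ℝ} (hr : 0 ≤ r) (hs : (1 + r) * t ≤ s) (x y : E) (k : ℕ)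
    (h : s ≤ ‖x - y‖ * r ^ (k + 1)) :
    t ≤ ‖x‖ * r ^ (k + 1) ∨ t ≤ ‖y‖ * r ^ k := by
  by_contra! hlt
  have hry : r * (‖y‖ * r ^ k) ≤ r * t := mul_le_mul_of_nonneg_left hlt.2.le hr
  have := calc ‖x - y‖ * r ^ (k + 1)
      ≤ (‖x‖ + ‖y‖) * r ^ (k + 1) := by gcongr; exact norm_sub_le x y
    _ = ‖x‖ * r ^ (k + 1) + r * (‖y‖ * r ^ k) := by ring
  linarith

theorem card_filter_coeff_one_sub_X_mul_le {R : Type*} [SeminormedRing R] (p : R[X]) (a : R)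
    {t r s : ℝ} (hr : 0 ≤ r) (hs : (1 + r) * t ≤ s) (n : ℕ) :
    #{k ∈ range (n + 2) | s ≤ ‖((1 - X) * p).coeff k‖ * r ^ k} ≤
      2 * #{k ∈ range (n + 1) | t ≤ ‖p.coeff k - a‖ * r ^ k} + 2 := by
  set B := {k ∈ range (n + 1) | t ≤ ‖p.coeff k - a‖ * r ^ k}
  have hsub : {k ∈ range (n + 2) | s ≤ ‖((1 - X) * p).coeff k‖ * r ^ k} ⊆
      {0, n + 1} ∪ (B ∪ B.image (· + 1)) := by
    intro k hk
    rw [mem_filter, mem_range] at hk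
    obtain ⟨hkn, hlarge⟩ := hk
    rcases k with _ | j
    · simp
    obtain rfl | hjn : j = n ∨ j < n := by omega
    · simp
    rw [coeff_one_sub_X_mul_succ, ← sub_sub_sub_cancel_right _ _ a] at hlarge
    simp only [mem_union, mem_image, B, mem_filter, mem_range]
    rcases le_or_le_of_le_norm_sub_mul_pow hr hs _ _ j hlarge with h | h
    · exact Or.inr (Or.inl ⟨by omega, h⟩)
    · exact Or.inr (Or.inr ⟨j, ⟨by omega, h⟩, rfl⟩)
  grw [card_le_card hsub, card_union_le, card_union_le, card_le_two, card_image_le]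
  omega

theorem card_filter_range_coeff_polyOf {n : ℕ} (lam : Fin (n + 1) → ℂ) (P : ℂ → ℕ → Prop)
    [∀ z k, Decidable (P z k)] :
    #{k ∈ range (n + 1) | P ((polyOf lam).coeff k) k} = #{k : Fin (n + 1) | P (lam k) k} := by
  rw [card_filter, card_filter, ← Fin.sum_univ_eq_sum_range]
  simp only [coeff_polyOf]

theorem few_large_coefficients_of_one_sub_z_mul_general
    (n : ℕ) (lam : Fin (n + 1) → ℂ) (a : ℂ) (δ r : ℝ) (hδ : 0 < δ) (hr : 0 < r)
    (m : ℕ)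
    (hfew : Finset.card (@Finset.filter (Fin (n + 1))
        (fun k => δ * (∑ j : Fin (n + 1), ‖lam j‖ * r ^ (j : ℕ)) ≤
          ‖lam k - a‖ * r ^ (k : ℕ))
        (Classical.decPred _) Finset.univ) ≤ 2 * m) :
    Finset.card (@Finset.filter ℕ
        (fun k => 2 * δ * (1 + r) * (∑ j : Fin (n + 1), ‖lam j‖ * r ^ (j : ℕ)) ≤
          ‖((1 - Polynomial.X) * polyOf lam).coeff k‖ * r ^ k)
        (Classical.decPred _) (Finset.range (n + 2))) ≤ 4 * m + 2 := by
  classical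
  set S := ∑ j : Fin (n + 1), ‖lam j‖ * r ^ (j : ℕ)
  have hs : (1 + r) * (δ * S) ≤ 2 * δ * (1 + r) * S := by
    have : 0 ≤ (1 + r) * (δ * S) := by positivity
    linarith
  have key := card_filter_coeff_one_sub_X_mul_le (polyOf lam) a hr.le hs n
  rw [card_filter_range_coeff_polyOf lam (fun z k => δ * S ≤ ‖z - a‖ * r ^ k)] at key
  omega

/-- **Claim.** Let `P(z) = ∑_{k=0}^n λ_k z^k`, `a ∈ ℂ`, `δ > 0`, `r > 0`, `m ≥ 1`.
If `#{k : |λ_k − a| r^k ≥ δ S(r,P)} ≤ 2m`, then the coefficients `λ̄_k` of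
`P̄(z) = (1−z)P(z)` satisfy `#{k ∈ {0,…,n+1} : |λ̄_k| r^k ≥ 2δ(1+r) S(r,P)} ≤ 4m + 2`. -/
theorem few_large_coefficients_of_one_sub_z_mul
    (n : ℕ) (lam : Fin (n + 1) → ℂ) (a : ℂ) (δ r : ℝ) (hδ : 0 < δ) (hr : 0 < r)
    (m : ℕ) (hm : 1 ≤ m)
    (hfew : Finset.card (@Finset.filter (Fin (n + 1))
        (fun k => δ * (∑ j : Fin (n + 1), ‖lam j‖ * r ^ (j : ℕ)) ≤
          ‖lam k - a‖ * r ^ (k : ℕ))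
        (Classical.decPred _) Finset.univ) ≤ 2 * m) :
    Finset.card (@Finset.filter ℕ
        (fun k => 2 * δ * (1 + r) * (∑ j : Fin (n + 1), ‖lam j‖ * r ^ (j : ℕ)) ≤
          ‖((1 - Polynomial.X) * polyOf lam).coeff k‖ * r ^ k)
        (Classical.decPred _) (Finset.range (n + 2))) ≤ 4 * m + 2 :=
  few_large_coefficients_of_one_sub_z_mul_general n lam a δ r hδ hr m hfew
end

section
/- Let μ be a Borel probability measure on ℝ and let a ∈ ℝ be a median of μ, i.e. μ((−∞, a]) ≥ ½ and μ([a, ∞)) ≥ ½. Then there exists a Borel probability measure ρ on ℝ × ℝ such that both marginals of ρ equal μ, ρ is invariant under the coordinate swap (x,y) ↦ (y,x), and ρ-almost every (x,y) satisfies |x − y| ≥ |x − a| + |y − a| (equivalently, a lies between x and y). -/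
/-!
Cut `μ` at the median into a half `ν₁` living on `(-∞, a]` and a half `ν₂` living on
`[a, ∞)`, sharing the atom at `a` between them as needed. The symmetrised product
`2 (ν₁ ⊗ ν₂ + ν₂ ⊗ ν₁)` has both marginals `ν₁ + ν₂ = μ`, is swap-invariant, and only
pairs a point left of `a` with a point right of `a`, for which
`|x - y| = |x - a| + |y - a|`.
-/

open MeasureTheory Set
open scoped ENNReal

namespace MeasureTheory.Measure

section Symmetrization

variable {α : Type*} [MeasurableSpace α]

noncomputable def symmProd (ν₁ ν₂ : Measure α) : Measure (α × α) :=
  ν₁.prod ν₂ + ν₂.prod ν₁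

variable {ν₁ ν₂ : Measure α}

lemma ae_symmProd {p q : α → Prop} (hp : ∀ᵐ x ∂ν₁, p x) (hq : ∀ᵐ x ∂ν₂, q x) :
    ∀ᵐ z ∂symmProd ν₁ ν₂, (p z.1 ∧ q z.2) ∨ (q z.1 ∧ p z.2) := by
  rw [symmProd, ae_add_measure_iff]
  exact ⟨(quasiMeasurePreserving_fst.ae hp).and (quasiMeasurePreserving_snd.ae hq) |>.mono
      fun _ h ↦ .inl h,
    (quasiMeasurePreserving_fst.ae hq).and (quasiMeasurePreserving_snd.ae hp) |>.mono
      fun _ h ↦ .inr h⟩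

variable [SFinite ν₁] [SFinite ν₂]

lemma map_swap_symmProd : (symmProd ν₁ ν₂).map Prod.swap = symmProd ν₁ ν₂ := by
  rw [symmProd, Measure.map_add _ _ measurable_swap, prod_swap, prod_swap, add_comm]

lemma map_fst_symmProd {m : ℝ≥0∞} (h₁ : ν₁ univ = m) (h₂ : ν₂ univ = m) :
    (symmProd ν₁ ν₂).map Prod.fst = m • (ν₁ + ν₂) := by
  rw [symmProd, Measure.map_add _ _ measurable_fst, map_fst_prod, map_fst_prod, h₁, h₂, smul_add]

lemma map_snd_symmProd {m : ℝ≥0∞} (h₁ : ν₁ univ = m) (h₂ : ν₂ univ = m) :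
    (symmProd ν₁ ν₂).map Prod.snd = m • (ν₁ + ν₂) := by
  rw [← map_swap_symmProd, map_map measurable_snd measurable_swap]
  exact map_fst_symmProd h₁ h₂

end Symmetrization

section LinearOrder

variable {α : Type*} [LinearOrder α] [TopologicalSpace α] [OrderClosedTopology α]
  [MeasurableSpace α] [OpensMeasurableSpace α]

lemma restrict_Iio_add_restrict_singleton_add_restrict_Ioi (μ : Measure α) (a : α) :
    μ.restrict (Iio a) + μ.restrict {a} + μ.restrict (Ioi a) = μ := by
  have hdisj : Disjoint (Iio a) (Ioi a) := (Iio_disjoint_Ici le_rfl).mono_right Ioi_subset_Ici_self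
  rw [add_right_comm, ← restrict_union hdisj measurableSet_Ioi, Iio_union_Ioi, add_comm,
    restrict_add_restrict_compl (measurableSet_singleton a)]

lemma exists_add_eq_of_measure_Iio_le_of_measure_Ioi_le (μ : Measure α) [IsFiniteMeasure μ]
    {a : α} {s t : ℝ≥0∞} (hs : μ (Iio a) ≤ s) (ht : μ (Ioi a) ≤ t)
    (hst : s + t = μ univ) :
    ∃ ν₁ ν₂ : Measure α, ν₁ + ν₂ = μ ∧ ν₁ univ = s ∧ ν₂ univ = t ∧
      (∀ᵐ x ∂ν₁, x ≤ a) ∧ ∀ᵐ x ∂ν₂, a ≤ x := by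
  have hdecomp := μ.restrict_Iio_add_restrict_singleton_add_restrict_Ioi a
  have hatom : (s - μ (Iio a)) + (t - μ (Ioi a)) = μ {a} := by
    have huniv := congrArg (· univ) hdecomp
    simp only [add_apply, restrict_apply_univ] at huniv
    refine (ENNReal.add_left_inj (ENNReal.add_ne_top.2 ⟨measure_ne_top μ (Iio a),
      measure_ne_top μ (Ioi a)⟩)).1 ?_
    rw [add_add_add_comm, tsub_add_cancel_of_le hs, tsub_add_cancel_of_le ht, hst, ← huniv]
    ring
  refine ⟨μ.restrict (Iio a) + (s - μ (Iio a)) • dirac a,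
    μ.restrict (Ioi a) + (t - μ (Ioi a)) • dirac a, ?_, ?_, ?_, ?_, ?_⟩
  · rw [restrict_singleton, ← hatom, add_smul] at hdecomp
    refine .trans ?_ hdecomp
    abel
  · simp [add_tsub_cancel_of_le hs]
  · simp [add_tsub_cancel_of_le ht]
  · exact ae_add_measure_iff.2 ⟨ae_restrict_of_forall_mem measurableSet_Iio fun _ ↦ le_of_lt,
      ae_smul_measure ((ae_dirac_iff measurableSet_Iic).2 le_rfl) _⟩
  · exact ae_add_measure_iff.2 ⟨ae_restrict_of_forall_mem measurableSet_Ioi fun _ ↦ le_of_lt,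
      ae_smul_measure ((ae_dirac_iff measurableSet_Ici).2 le_rfl) _⟩

end LinearOrder

end MeasureTheory.Measure

lemma MeasureTheory.prob_compl_le_inv_two {Ω : Type*} [MeasurableSpace Ω] {μ : Measure Ω}
    [IsProbabilityMeasure μ] {s : Set Ω} (hs : MeasurableSet s) (h : 2⁻¹ ≤ μ s) :
    μ sᶜ ≤ 2⁻¹ := by
  rw [prob_compl_eq_one_sub hs, ← ENNReal.one_sub_inv_two]
  exact tsub_le_tsub_left h 1

lemma abs_sub_add_abs_sub_eq_abs_sub {α : Type*} [AddCommGroup α] [LinearOrder α]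
    [IsOrderedAddMonoid α] {x y a : α} (h : (x ≤ a ∧ a ≤ y) ∨ (a ≤ x ∧ y ≤ a)) :
    |x - a| + |y - a| = |x - y| := by
  rw [abs_sub_comm y a, ← sub_add_sub_cancel x a y, (abs_add_eq_add_abs_iff _ _).2]
  simp only [sub_nonneg, sub_nonpos]
  tauto

/-- **Coupling lemma for real laws with a median.** Let `μ` be a Borel probability
measure on `ℝ` and `a` a median of `μ`. Then there is a Borel probability measure `ρ` on
`ℝ × ℝ` whose marginals are both `μ`, which is swap-invariant, and such that `ρ`-almost
every `(x,y)` satisfies `|x − y| ≥ |x − a| + |y − a|`. -/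
theorem swap_invariant_coupling_median
    (μ : Measure ℝ) (hμ : IsProbabilityMeasure μ) (a : ℝ)
    (hmed₁ : (1 / 2 : ENNReal) ≤ μ (Set.Iic a))
    (hmed₂ : (1 / 2 : ENNReal) ≤ μ (Set.Ici a)) :
    ∃ ρ : Measure (ℝ × ℝ), IsProbabilityMeasure ρ ∧
      ρ.map Prod.fst = μ ∧ ρ.map Prod.snd = μ ∧
      ρ.map Prod.swap = ρ ∧
      (∀ᵐ p ∂ρ, |p.1 - a| + |p.2 - a| ≤ |p.1 - p.2|) := by
  rw [one_div] at hmed₁ hmed₂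
  have hIio : μ (Iio a) ≤ 2⁻¹ :=
    compl_Ici (a := a) ▸ prob_compl_le_inv_two measurableSet_Ici hmed₂
  have hIoi : μ (Ioi a) ≤ 2⁻¹ :=
    compl_Iic (a := a) ▸ prob_compl_le_inv_two measurableSet_Iic hmed₁
  obtain ⟨ν₁, ν₂, rfl, h₁, h₂, hle, hge⟩ :=
    μ.exists_add_eq_of_measure_Iio_le_of_measure_Ioi_le hIio hIoi
      (by rw [ENNReal.inv_two_add_inv_two, measure_univ])
  have : IsFiniteMeasure ν₁ := ⟨by simp [h₁]⟩
  have : IsFiniteMeasure ν₂ := ⟨by simp [h₂]⟩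
  have h2 : (2 : ℝ≥0∞) * 2⁻¹ = 1 := ENNReal.mul_inv_cancel two_ne_zero ENNReal.ofNat_ne_top
  set ρ := (2 : ℝ≥0∞) • Measure.symmProd ν₁ ν₂
  have hfst : ρ.map Prod.fst = ν₁ + ν₂ := by
    rw [Measure.map_smul, Measure.map_fst_symmProd h₁ h₂, smul_smul, h2, one_smul]
  refine ⟨ρ, (Measure.isProbabilityMeasure_map_iff measurable_fst.aemeasurable).1 (hfst ▸ hμ),
    hfst, ?_, ?_, ?_⟩
  · rw [Measure.map_smul, Measure.map_snd_symmProd h₁ h₂, smul_smul, h2, one_smul]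
  · rw [Measure.map_smul, Measure.map_swap_symmProd]
  · filter_upwards [Measure.ae_smul_measure (Measure.ae_symmProd hle hge) 2] with p hp
    exact (abs_sub_add_abs_sub_eq_abs_sub hp).le
end
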